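/- arXiv:1210.3536 — 2 statements merged into one kernel-verified Lean document; each statement's English description precedes it below -/
import Mathlib

section
/- For φ, ψ ∈ [0, 2π) the following hold: (i) if N₊(φ) = N₊(ψ) then φ = ψ; (ii) if N₋(φ) = N₋(ψ) then φ = ψ; (iii) N₊(φ) ≠ N₋(ψ) for all φ, ψ ∈ [0, 2π). Consequently the set of 2-dimensional totally null subspaces of (ℝ⁴, B) is a disjoint union of two families, each parametrized bijectively by the circle [0, 2π). -/
/-- The standard split signature bilinear form on ℝ⁴ = ℝ^(2,2). -/
def B (y z : Fin 4 → ℝ) : ℝ := y 0 * z 0 + y 1 * z 1 - y 2 * z 2 - y 3 * z 3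

/-- A subspace of ℝ⁴ is totally null w.r.t. `B` if `B` vanishes identically on it. -/
def TotallyNull (N : Submodule ℝ (Fin 4 → ℝ)) : Prop :=
  ∀ v ∈ N, ∀ w ∈ N, B v w = 0

/-- The selfdual totally null plane `N₊(φ)`. -/
noncomputable def Nplus (φ : ℝ) : Submodule ℝ (Fin 4 → ℝ) :=
  Submodule.span ℝ {![1, 0, Real.cos φ, Real.sin φ], ![0, 1, Real.sin φ, -Real.cos φ]}

/-- The antiselfdual totally null plane `N₋(φ)`. -/
noncomputable def Nminus (φ : ℝ) : Submodule ℝ (Fin 4 → ℝ) :=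
  Submodule.span ℝ {![1, 0, Real.cos φ, Real.sin φ], ![0, 1, -Real.sin φ, Real.cos φ]}

/-!
A totally null plane meets `{y | y 0 = 0 ∧ y 1 = 0}`, on which `B` is negative definite, only
in `0`. Being 2-dimensional, it therefore projects isomorphically onto the first two
coordinates, i.e. it is the graph `graphPlane a b c d` of the linear map `ℝ² → ℝ²` with matrix
`[[a, c], [b, d]]`.
The graph is totally null iff this matrix is orthogonal. An orthogonal `2 × 2` matrix is a
reflection (giving `N₊`) or a rotation (giving `N₋`), determined by the angle of its first column;
since distinct maps have distinct graphs, this gives injectivity and disjointness.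
-/

open Real Submodule

theorem eq_of_cos_eq_of_sin_eq_of_mem_Ico {φ ψ : ℝ} (hφ : φ ∈ Set.Ico 0 (2 * π))
    (hψ : ψ ∈ Set.Ico 0 (2 * π)) (hc : cos φ = cos ψ) (hs : sin φ = sin ψ) : φ = ψ := by
  have := Fact.mk two_pi_pos
  exact (AddCircle.coe_eq_coe_iff_of_mem_Ico (a := 0) (by rwa [zero_add]) (by rwa [zero_add])).mp
    (Angle.cos_sin_inj hc hs)

theorem exists_mem_Ico_cos_eq_sin_eq {a b : ℝ} (h : a ^ 2 + b ^ 2 = 1) :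
    ∃ θ ∈ Set.Ico 0 (2 * π), cos θ = a ∧ sin θ = b := by
  have := Fact.mk two_pi_pos
  set z : ℂ := ⟨a, b⟩
  have hz : ‖z‖ = 1 := by
    rw [Complex.norm_def, Complex.normSq_mk, ← sq, ← sq, h, Real.sqrt_one]
  have hz0 : z ≠ 0 := norm_ne_zero_iff.mp (by rw [hz]; exact one_ne_zero)
  set θ := AddCircle.equivIco (2 * π) 0 (z.arg : Angle)
  have hθ : ((θ : ℝ) : Angle) = z.arg := AddCircle.coe_equivIco
  refine ⟨θ, by simpa using θ.2, ?_, ?_⟩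
  · rw [← Angle.cos_coe, hθ, Angle.cos_coe, Complex.cos_arg hz0, hz, div_one]
  · rw [← Angle.sin_coe, hθ, Angle.sin_coe, Complex.sin_arg, hz, div_one]

section SpanPair

variable {R ι : Type*} [CommRing R] {i j : ι} {u w u' w' : ι → R}

theorem mem_span_pair_iff_eq_add (hui : u i = 1) (huj : u j = 0) (hwi : w i = 0)
    (hwj : w j = 1) {x : ι → R} : x ∈ span R {u, w} ↔ x = x i • u + x j • w := by
  rw [mem_span_pair]
  constructor
  · rintro ⟨a, b, rfl⟩
    simp [hui, huj, hwi, hwj]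
  · exact fun h => ⟨x i, x j, h.symm⟩

theorem span_pair_eq_span_pair_iff (hui : u i = 1) (huj : u j = 0) (hwi : w i = 0)
    (hwj : w j = 1) (hui' : u' i = 1) (huj' : u' j = 0) (hwi' : w' i = 0) (hwj' : w' j = 1) :
    span R {u, w} = span R {u', w'} ↔ u = u' ∧ w = w' := by
  refine ⟨fun h => ⟨?_, ?_⟩, by rintro ⟨rfl, rfl⟩; rfl⟩
  · have hu : u ∈ span R {u', w'} := h ▸ subset_span (by simp)
    simpa [hui, huj] using (mem_span_pair_iff_eq_add hui' huj' hwi' hwj').mp hu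
  · have hw : w ∈ span R {u', w'} := h ▸ subset_span (by simp)
    simpa [hwi, hwj] using (mem_span_pair_iff_eq_add hui' huj' hwi' hwj').mp hw

theorem finrank_span_pair [StrongRankCondition R] (hui : u i = 1) (huj : u j = 0)
    (hwi : w i = 0) (hwj : w j = 1) : Module.finrank R (span R {u, w}) = 2 := by
  have := nontrivial_of_invariantBasisNumber R
  have hli : LinearIndependent R ![u, w] := by
    refine LinearIndependent.pair_iff.mpr fun s t h => ⟨?_, ?_⟩
    · simpa [hui, hwi] using congrFun h i
    · simpa [huj, hwj] using congrFun h j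
  rw [← Matrix.range_cons_cons_empty u w ![], finrank_span_eq_card hli, Fintype.card_fin]

end SpanPair

noncomputable def graphPlane (a b c d : ℝ) : Submodule ℝ (Fin 4 → ℝ) :=
  span ℝ {![1, 0, a, b], ![0, 1, c, d]}

section GraphPlane

variable {a b c d : ℝ}

theorem mem_graphPlane_iff {x : Fin 4 → ℝ} :
    x ∈ graphPlane a b c d ↔ x = x 0 • ![1, 0, a, b] + x 1 • ![0, 1, c, d] :=
  mem_span_pair_iff_eq_add (by simp) (by simp) (by simp) (by simp)

theorem finrank_graphPlane : Module.finrank ℝ (graphPlane a b c d) = 2 :=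
  finrank_span_pair (i := 0) (j := 1) (by simp) (by simp) (by simp) (by simp)

theorem graphPlane_eq_graphPlane_iff {a' b' c' d' : ℝ} :
    graphPlane a b c d = graphPlane a' b' c' d' ↔ a = a' ∧ b = b' ∧ c = c' ∧ d = d' := by
  rw [graphPlane, graphPlane, span_pair_eq_span_pair_iff (i := 0) (j := 1)] <;> simp [and_assoc]

theorem totallyNull_graphPlane_iff :
    TotallyNull (graphPlane a b c d) ↔
      a ^ 2 + b ^ 2 = 1 ∧ a * c + b * d = 0 ∧ c ^ 2 + d ^ 2 = 1 := by
  constructor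
  · intro h
    have hu : ![1, 0, a, b] ∈ graphPlane a b c d := subset_span (by simp)
    have hw : ![0, 1, c, d] ∈ graphPlane a b c d := subset_span (by simp)
    have huu := h _ hu _ hu
    have huw := h _ hu _ hw
    have hww := h _ hw _ hw
    simp only [B, Matrix.cons_val_zero, Matrix.cons_val_one, Matrix.cons_val, mul_one, mul_zero,
      add_zero, zero_add, zero_sub] at huu huw hww
    refine ⟨by linear_combination -huu, by linear_combination -huw, by linear_combination -hww⟩
  · rintro ⟨huu, huw, hww⟩ v hv w hw
    rw [mem_graphPlane_iff] at hv hw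
    rw [hv, hw]
    simp only [B, Matrix.smul_cons, smul_eq_mul, mul_one, mul_zero, Matrix.smul_empty,
      Pi.add_apply, Matrix.cons_val_zero, Matrix.cons_val_one, Matrix.cons_val, add_zero, zero_add]
    linear_combination (-(v 0 * w 0)) * huu - (v 0 * w 1 + v 1 * w 0) * huw - v 1 * w 1 * hww

end GraphPlane

theorem eq_zero_of_B_self_eq_zero {v : Fin 4 → ℝ} (hv : B v v = 0) (h0 : v 0 = 0)
    (h1 : v 1 = 0) : v = 0 := by
  simp only [B, h0, h1, mul_zero, zero_add] at hv
  have h2 : v 2 = 0 := by nlinarith [sq_nonneg (v 2), sq_nonneg (v 3)]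
  have h3 : v 3 = 0 := by nlinarith [sq_nonneg (v 2), sq_nonneg (v 3)]
  ext k
  fin_cases k <;> assumption

theorem TotallyNull.exists_eq_graphPlane {N : Submodule ℝ (Fin 4 → ℝ)} (hN : TotallyNull N)
    (hdim : Module.finrank ℝ N = 2) : ∃ a b c d, N = graphPlane a b c d := by
  let q : N →ₗ[ℝ] Fin 2 → ℝ :=
    (LinearMap.funLeft ℝ ℝ (Fin.castLE (by norm_num))).comp N.subtype
  have hq_inj : Function.Injective q := by
    refine LinearMap.ker_eq_bot.mp (eq_bot_iff.mpr fun ⟨v, hv⟩ hker => ?_)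
    have hqv : q ⟨v, hv⟩ = 0 := hker
    simpa using eq_zero_of_B_self_eq_zero (hN v hv v hv) (congrFun hqv 0) (congrFun hqv 1)
  have hq_surj : Function.Surjective q :=
    (LinearMap.injective_iff_surjective_of_finrank_eq_finrank (by simp [hdim])).mp hq_inj
  obtain ⟨⟨u, hu⟩, hqu⟩ := hq_surj ![1, 0]
  obtain ⟨⟨w, hw⟩, hqw⟩ := hq_surj ![0, 1]
  have hu_eq : ![1, 0, u 2, u 3] = u := by
    ext k; fin_cases k
    exacts [(congrFun hqu 0).symm, (congrFun hqu 1).symm, rfl, rfl]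
  have hw_eq : ![0, 1, w 2, w 3] = w := by
    ext k; fin_cases k
    exacts [(congrFun hqw 0).symm, (congrFun hqw 1).symm, rfl, rfl]
  refine ⟨u 2, u 3, w 2, w 3, (eq_of_le_of_finrank_le ?_ ?_).symm⟩
  · rw [graphPlane, span_le, Set.insert_subset_iff, Set.singleton_subset_iff, hu_eq, hw_eq]
    exact ⟨hu, hw⟩
  · rw [hdim, finrank_graphPlane]

theorem eq_or_eq_neg_of_orthonormal {a b c d : ℝ} (hab : a ^ 2 + b ^ 2 = 1)
    (hac : a * c + b * d = 0) (hcd : c ^ 2 + d ^ 2 = 1) : (c, d) = (b, -a) ∨ (c, d) = (-b, a) := by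
  -- `β` is the determinant of `[[a, c], [b, d]]`.
  set β := b * c - a * d
  have hc : c = β * b := by linear_combination (-c) * hab + a * hac
  have hd : d = -(β * a) := by linear_combination (-d) * hab + b * hac
  have hβ : (β - 1) * (β + 1) = 0 := by
    linear_combination (c ^ 2 + d ^ 2) * hab + hcd - (a * c + b * d) * hac
  rcases mul_eq_zero.mp hβ with hβ | hβ
  · left
    rw [hc, hd, eq_of_sub_eq_zero hβ]
    simp
  · right
    rw [hc, hd, eq_neg_of_add_eq_zero_left hβ]
    simp

theorem Nplus_eq_graphPlane (φ : ℝ) : Nplus φ = graphPlane (cos φ) (sin φ) (sin φ) (-cos φ) :=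
  rfl

theorem Nminus_eq_graphPlane (φ : ℝ) : Nminus φ = graphPlane (cos φ) (sin φ) (-sin φ) (cos φ) :=
  rfl

theorem totallyNull_Nplus (φ : ℝ) : TotallyNull (Nplus φ) :=
  totallyNull_graphPlane_iff.mpr
    ⟨by rw [add_comm, sin_sq_add_cos_sq], by ring, by rw [neg_sq, sin_sq_add_cos_sq]⟩

theorem totallyNull_Nminus (φ : ℝ) : TotallyNull (Nminus φ) :=
  totallyNull_graphPlane_iff.mpr
    ⟨by rw [add_comm, sin_sq_add_cos_sq], by ring, by rw [neg_sq, sin_sq_add_cos_sq]⟩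

theorem Nplus_injOn : Set.InjOn Nplus (Set.Ico 0 (2 * π)) := by
  intro φ hφ ψ hψ h
  rw [Nplus_eq_graphPlane, Nplus_eq_graphPlane, graphPlane_eq_graphPlane_iff] at h
  exact eq_of_cos_eq_of_sin_eq_of_mem_Ico hφ hψ h.1 h.2.1

theorem Nminus_injOn : Set.InjOn Nminus (Set.Ico 0 (2 * π)) := by
  intro φ hφ ψ hψ h
  rw [Nminus_eq_graphPlane, Nminus_eq_graphPlane, graphPlane_eq_graphPlane_iff] at h
  exact eq_of_cos_eq_of_sin_eq_of_mem_Ico hφ hψ h.1 h.2.1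

theorem Nplus_ne_Nminus (φ ψ : ℝ) : Nplus φ ≠ Nminus ψ := by
  intro h
  obtain ⟨hc, hs, hs', hc'⟩ := graphPlane_eq_graphPlane_iff.mp h
  have hcos : cos ψ = 0 := by linarith
  have hsin : sin ψ = 0 := by linarith
  simpa [hcos, hsin] using sin_sq_add_cos_sq ψ

theorem TotallyNull.exists_eq_Nplus_or_eq_Nminus {N : Submodule ℝ (Fin 4 → ℝ)}
    (hN : TotallyNull N) (hdim : Module.finrank ℝ N = 2) :
    ∃ θ ∈ Set.Ico 0 (2 * π), N = Nplus θ ∨ N = Nminus θ := by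
  obtain ⟨a, b, c, d, rfl⟩ := hN.exists_eq_graphPlane hdim
  obtain ⟨hab, hac, hcd⟩ := totallyNull_graphPlane_iff.mp hN
  obtain ⟨θ, hθ, rfl, rfl⟩ := exists_mem_Ico_cos_eq_sin_eq hab
  refine ⟨θ, hθ, ?_⟩
  rcases eq_or_eq_neg_of_orthonormal hab hac hcd with h | h <;>
    obtain ⟨rfl, rfl⟩ := Prod.mk.inj h
  exacts [Or.inl rfl, Or.inr rfl]

theorem setOf_finrank_eq_two_totallyNull :
    {N : Submodule ℝ (Fin 4 → ℝ) | Module.finrank ℝ N = 2 ∧ TotallyNull N} =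
      Nplus '' Set.Ico 0 (2 * π) ∪ Nminus '' Set.Ico 0 (2 * π) := by
  ext N
  constructor
  · rintro ⟨hdim, hN⟩
    obtain ⟨θ, hθ, h | h⟩ := hN.exists_eq_Nplus_or_eq_Nminus hdim
    exacts [Or.inl ⟨θ, hθ, h.symm⟩, Or.inr ⟨θ, hθ, h.symm⟩]
  · rintro (⟨θ, -, rfl⟩ | ⟨θ, -, rfl⟩)
    exacts [⟨finrank_graphPlane, totallyNull_Nplus θ⟩, ⟨finrank_graphPlane, totallyNull_Nminus θ⟩]

theorem stmt_3 :
    (∀ φ ∈ Set.Ico (0 : ℝ) (2 * Real.pi), ∀ ψ ∈ Set.Ico (0 : ℝ) (2 * Real.pi),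
      Nplus φ = Nplus ψ → φ = ψ) ∧
    (∀ φ ∈ Set.Ico (0 : ℝ) (2 * Real.pi), ∀ ψ ∈ Set.Ico (0 : ℝ) (2 * Real.pi),
      Nminus φ = Nminus ψ → φ = ψ) ∧
    (∀ φ ∈ Set.Ico (0 : ℝ) (2 * Real.pi), ∀ ψ ∈ Set.Ico (0 : ℝ) (2 * Real.pi),
      Nplus φ ≠ Nminus ψ) ∧
    {N : Submodule ℝ (Fin 4 → ℝ) | Module.finrank ℝ N = 2 ∧ TotallyNull N} =
      (Nplus '' Set.Ico (0 : ℝ) (2 * Real.pi)) ∪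
      (Nminus '' Set.Ico (0 : ℝ) (2 * Real.pi)) ∧
    Disjoint (Nplus '' Set.Ico (0 : ℝ) (2 * Real.pi))
      (Nminus '' Set.Ico (0 : ℝ) (2 * Real.pi)) := by
  refine ⟨fun φ hφ ψ hψ => Nplus_injOn hφ hψ, fun φ hφ ψ hψ => Nminus_injOn hφ hψ,
    fun φ _ ψ _ => Nplus_ne_Nminus φ ψ, setOf_finrank_eq_two_totallyNull, ?_⟩
  rw [Set.disjoint_left]
  rintro _ ⟨φ, -, rfl⟩ ⟨ψ, -, h⟩
  exact Nplus_ne_Nminus φ ψ h.symm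
end

section
/- Define h(ρ) = ∫₁^ρ √(s⁴ − 1) ds for ρ ≥ 1, and define F(ρ, φ) = (ρ cos φ, ρ sin φ, h(ρ)) for ρ > 1 and φ ∈ ℝ. Then for every such (ρ, φ) the partial derivatives of F satisfy, with respect to the Euclidean inner product ⟨·,·⟩ on ℝ³: ⟨∂F/∂ρ, ∂F/∂ρ⟩ = ρ⁴, ⟨∂F/∂ρ, ∂F/∂φ⟩ = 0, and ⟨∂F/∂φ, ∂F/∂φ⟩ = ρ²; that is, F is an isometric immersion of the metric g₁ₒ = ρ⁴ dρ² + ρ² dφ², restricted to ρ > 1, into Euclidean ℝ³ as a surface of revolution Z = f(√(X² + Y²)) with f(t) = ∫₁^t √(s⁴ − 1) ds. -/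
/-- The Euclidean inner product on ℝ³. -/
def dot3 (u v : Fin 3 → ℝ) : ℝ := u 0 * v 0 + u 1 * v 1 + u 2 * v 2

/-- `h(ρ) = ∫₁^ρ √(s⁴ - 1) ds`. -/
noncomputable def hInt (ρ : ℝ) : ℝ := ∫ s in (1 : ℝ)..ρ, Real.sqrt (s ^ 4 - 1)

/-- The embedding `F(ρ,φ) = (ρ cos φ, ρ sin φ, h(ρ))` of the portion `ρ > 1` of the
surface `g₁ₒ = ρ⁴ dρ² + ρ² dφ²` into ℝ³ as a surface of revolution. -/
noncomputable def Fo (ρ φ : ℝ) : Fin 3 → ℝ :=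
  ![ρ * Real.cos φ, ρ * Real.sin φ, hInt ρ]

/-! The profile `h` has `h' = √(ρ⁴ - 1)`, so `|∂F/∂ρ|² = cos² φ + sin² φ + (ρ⁴ - 1) = ρ⁴`;
the angular derivative `(-ρ sin φ, ρ cos φ, 0)` is horizontal, of length `ρ`, and orthogonal
to the radial one. -/

open Real

@[simp]
lemma dot3_vecCons (a b c d e f : ℝ) : dot3 ![a, b, c] ![d, e, f] = a * d + b * e + c * f := rfl

lemma hasDerivAt_hInt (ρ : ℝ) : HasDerivAt hInt (√(ρ ^ 4 - 1)) ρ := by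
  have hc : Continuous fun s : ℝ => √(s ^ 4 - 1) := by fun_prop
  exact intervalIntegral.integral_hasDerivAt_right
    (hc.intervalIntegrable _ _) (hc.stronglyMeasurableAtFilter _ _) hc.continuousAt

lemma deriv_Fo_radial (ρ φ : ℝ) :
    deriv (fun r => Fo r φ) ρ = ![cos φ, sin φ, √(ρ ^ 4 - 1)] := by
  refine (hasDerivAt_pi.2 fun i => ?_).deriv
  fin_cases i
  · simpa [Fo] using (hasDerivAt_id ρ).mul_const (cos φ)
  · simpa [Fo] using (hasDerivAt_id ρ).mul_const (sin φ)
  · simpa [Fo] using hasDerivAt_hInt ρ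

lemma deriv_Fo_angular (ρ φ : ℝ) :
    deriv (fun t => Fo ρ t) φ = ![-(ρ * sin φ), ρ * cos φ, 0] := by
  refine (hasDerivAt_pi.2 fun i => ?_).deriv
  fin_cases i
  · simpa [Fo, mul_comm] using (hasDerivAt_cos φ).const_mul ρ
  · simpa [Fo] using (hasDerivAt_sin φ).const_mul ρ
  · simpa [Fo] using hasDerivAt_const φ (hInt ρ)

lemma Fo_zero_sq_add_Fo_one_sq (ρ φ : ℝ) : Fo ρ φ 0 ^ 2 + Fo ρ φ 1 ^ 2 = ρ ^ 2 := by
  simp only [Fo, Matrix.cons_val_zero, Matrix.cons_val_one]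
  linear_combination ρ ^ 2 * cos_sq_add_sin_sq φ

theorem stmt_17 :
    ∀ ρ φ : ℝ, 1 < ρ →
      -- F is an isometric immersion of g₁ₒ = ρ⁴ dρ² + ρ² dφ² for ρ > 1
      dot3 (deriv (fun r => Fo r φ) ρ) (deriv (fun r => Fo r φ) ρ) = ρ ^ 4 ∧
      dot3 (deriv (fun r => Fo r φ) ρ) (deriv (fun t => Fo ρ t) φ) = 0 ∧
      dot3 (deriv (fun t => Fo ρ t) φ) (deriv (fun t => Fo ρ t) φ) = ρ ^ 2 ∧
      -- F is a surface of revolution: Z = f(√(X² + Y²)) with f(t) = ∫₁^t √(s⁴-1) ds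
      Fo ρ φ 2 = hInt (Real.sqrt ((Fo ρ φ 0) ^ 2 + (Fo ρ φ 1) ^ 2)) := by
  intro ρ φ hρ
  have hρ4 : 1 ≤ ρ ^ 4 := one_le_pow₀ hρ.le
  have hsqrt : √(ρ ^ 4 - 1) * √(ρ ^ 4 - 1) = ρ ^ 4 - 1 := mul_self_sqrt (by linarith)
  rw [deriv_Fo_radial, deriv_Fo_angular, Fo_zero_sq_add_Fo_one_sq, sqrt_sq (by linarith)]
  simp only [dot3_vecCons]
  refine ⟨?_, by ring, ?_, rfl⟩
  · linear_combination hsqrt + sin_sq_add_cos_sq φ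
  · linear_combination ρ ^ 2 * sin_sq_add_cos_sq φ
end
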